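/- Let n ≥ 1, N ≥ 1, ω ∈ ℂ with ω^N = 1, τ : ℂ → ℂ with τ^N(ν) = ν for all ν, and g^{(j)}(ν) = ω^j for j = 0,…,N−1. Let r : ℂ×ℂ → M_{n²}(ℂ) and let k : ℂ → GL_n(ℂ) satisfy the N-unitarity relation k^{(N)}(ν) = f(ν)·1_n for some scalar function f with f(ν) ≠ 0 for all ν, and the symmetry relation r_{ab}(λ,ν) = ω·k_a(λ)k_b(ν)·r_{ab}(τ(λ),τ(ν))·k_b(ν)^{−1}k_a(λ)^{−1} for all λ,ν. Then k satisfies the N-reflection equation for r with this τ and these g^{(j)}. -/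

import Mathlib

/-!
Right multiplication by `k_a(λ)` turns the `j`-th summand of the left-hand side into `k_a(λ)`
times the `(j+1)`-st summand of the right-hand side: the symmetry relation at `(λ, τʲ(ν))`
supplies the extra factors `ω` and `k_b(τʲ(ν))` that extend `g⁽ʲ⁾` and `k⁽ʲ⁾` to `g⁽ʲ⁺¹⁾` and
`k⁽ʲ⁺¹⁾`, and `k_a(λ)` commutes with everything acting on the second leg. The index shift is
harmless because the `N`-th summand equals the `0`-th: `ωᴺ = 1`, `τᴺ = id`, and conjugation
by the scalar matrix `k⁽ᴺ⁾_b(ν)` is trivial.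
-/

open Matrix Kronecker

noncomputable section

/-- `x_a = x ⊗ 1`, acting on `ℂ^n ⊗ ℂ^n`. -/
def legA (n : ℕ) (x : Matrix (Fin n) (Fin n) ℂ) :
    Matrix (Fin n × Fin n) (Fin n × Fin n) ℂ :=
  x ⊗ₖ (1 : Matrix (Fin n) (Fin n) ℂ)

/-- `x_b = 1 ⊗ x`, acting on `ℂ^n ⊗ ℂ^n`. -/
def legB (n : ℕ) (x : Matrix (Fin n) (Fin n) ℂ) :
    Matrix (Fin n × Fin n) (Fin n × Fin n) ℂ :=
  (1 : Matrix (Fin n) (Fin n) ℂ) ⊗ₖ x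

/-- `k⁽ʲ⁾(ν) = k⁽ʲ⁻¹⁾(ν) · k(τʲ⁻¹(ν))`, with `k⁽⁰⁾ = 1`. -/
def kiter {n : ℕ} (k : ℂ → Matrix (Fin n) (Fin n) ℂ) (τ : ℂ → ℂ) :
    ℕ → ℂ → Matrix (Fin n) (Fin n) ℂ
  | 0, _ => 1
  | j + 1, ν => kiter k τ j ν * k (τ^[j] ν)

/-- The classical `N`-reflection equation for `r`, `τ`, `g` and `k`. -/
def NRefl (n N : ℕ) (r : ℂ → ℂ → Matrix (Fin n × Fin n) (Fin n × Fin n) ℂ)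
    (τ : ℂ → ℂ) (g : ℕ → ℂ → ℂ) (k : ℂ → Matrix (Fin n) (Fin n) ℂ) : Prop :=
  ∀ lam ν : ℂ,
    (∑ j ∈ Finset.range N,
        g j ν • (legB n (kiter k τ j ν) * r lam (τ^[j] ν) * (legB n (kiter k τ j ν))⁻¹))
        * legA n (k lam)
      = legA n (k lam) *
        ∑ j ∈ Finset.range N,
          g j ν • (legB n (kiter k τ j ν) * r (τ lam) (τ^[j] ν) * (legB n (kiter k τ j ν))⁻¹)

theorem Finset.sum_range_succ_eq_sum_range_of_eq {M : Type*} [AddCommMonoid M] {F : ℕ → M}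
    {N : ℕ} (hF : F N = F 0) :
    ∑ j ∈ Finset.range N, F (j + 1) = ∑ j ∈ Finset.range N, F j := by
  cases N with
  | zero => simp
  | succ m => rw [Finset.sum_range_succ, hF, ← Finset.sum_range_succ']

theorem Matrix.mul_mul_inv_of_eq_smul_one {ι R : Type*} [Fintype ι] [DecidableEq ι] [CommRing R]
    {X : Matrix ι ι R} (hX : IsUnit X) {c : R} (hc : X = c • 1) (M : Matrix ι ι R) :
    X * M * X⁻¹ = M := by
  have hXM : X * M = M * X := by rw [hc, smul_one_mul, mul_smul_one]
  rw [hXM, mul_assoc, mul_nonsing_inv _ ((isUnit_iff_isUnit_det X).mp hX), mul_one]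

section Legs

variable {n : ℕ}

theorem legA_mul (x y : Matrix (Fin n) (Fin n) ℂ) : legA n (x * y) = legA n x * legA n y := by
  simp [legA, ← mul_kronecker_mul]

theorem legB_mul (x y : Matrix (Fin n) (Fin n) ℂ) : legB n (x * y) = legB n x * legB n y := by
  simp [legB, ← mul_kronecker_mul]

theorem legA_inv (x : Matrix (Fin n) (Fin n) ℂ) : (legA n x)⁻¹ = legA n x⁻¹ := by
  simp [legA, inv_kronecker]

theorem legB_inv (x : Matrix (Fin n) (Fin n) ℂ) : (legB n x)⁻¹ = legB n x⁻¹ := by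
  simp [legB, inv_kronecker]

theorem legB_smul_one (c : ℂ) : legB n (c • 1) = c • 1 := by
  simp [legB, kronecker_smul]

theorem legB_mul_legA (x y : Matrix (Fin n) (Fin n) ℂ) :
    legB n y * legA n x = legA n x * legB n y := by
  simp [legA, legB, ← mul_kronecker_mul]

theorem legB_mul_legA_mul (x y : Matrix (Fin n) (Fin n) ℂ)
    (M : Matrix (Fin n × Fin n) (Fin n × Fin n) ℂ) :
    legB n y * (legA n x * M) = legA n x * (legB n y * M) := by
  rw [← mul_assoc, legB_mul_legA, mul_assoc]

theorem legA_inv_mul_legA_mul {x : Matrix (Fin n) (Fin n) ℂ} (hx : IsUnit x)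
    (M : Matrix (Fin n × Fin n) (Fin n × Fin n) ℂ) :
    legA n x⁻¹ * (legA n x * M) = M := by
  rw [← mul_assoc, ← legA_mul, nonsing_inv_mul _ ((isUnit_iff_isUnit_det x).mp hx)]
  simp [legA]

theorem isUnit_legB {x : Matrix (Fin n) (Fin n) ℂ} (hx : IsUnit x) : IsUnit (legB n x) :=
  IsUnit.of_mul_eq_one (legB n x⁻¹) <| by
    rw [← legB_mul, mul_nonsing_inv _ ((isUnit_iff_isUnit_det x).mp hx)]
    simp [legB]

end Legs

theorem isUnit_kiter {n : ℕ} {k : ℂ → Matrix (Fin n) (Fin n) ℂ} (hk : ∀ ν, IsUnit (k ν))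
    (τ : ℂ → ℂ) (j : ℕ) (ν : ℂ) : IsUnit (kiter k τ j ν) := by
  induction j with
  | zero => exact isUnit_one
  | succ j ih => exact ih.mul (hk _)

section ReflectionTerm

variable {n : ℕ} (r : ℂ → ℂ → Matrix (Fin n × Fin n) (Fin n × Fin n) ℂ) (τ : ℂ → ℂ)
  (k : ℂ → Matrix (Fin n) (Fin n) ℂ) (ω : ℂ)

def reflTerm (lam ν : ℂ) (j : ℕ) : Matrix (Fin n × Fin n) (Fin n × Fin n) ℂ :=
  ω ^ j • (legB n (kiter k τ j ν) * r lam (τ^[j] ν) * (legB n (kiter k τ j ν))⁻¹)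

theorem reflTerm_mul_legA
    (hsym : ∀ lam ν : ℂ, r lam ν = ω • (legA n (k lam) * legB n (k ν) * r (τ lam) (τ ν)
        * (legB n (k ν))⁻¹ * (legA n (k lam))⁻¹))
    {lam : ℂ} (hk : IsUnit (k lam)) (ν : ℂ) (j : ℕ) :
    reflTerm r τ k ω lam ν j * legA n (k lam)
      = legA n (k lam) * reflTerm r τ k ω (τ lam) ν (j + 1) := by
  rw [reflTerm, reflTerm, hsym lam (τ^[j] ν), ← Function.iterate_succ_apply' τ j ν]
  simp only [kiter, legB_mul, legB_inv, legA_inv, Matrix.mul_inv_rev, smul_mul_assoc,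
    mul_smul_comm, smul_smul, mul_assoc, legB_mul_legA, legB_mul_legA_mul,
    legA_inv_mul_legA_mul hk, pow_succ]

theorem reflTerm_period {N : ℕ} (hk : ∀ ν, IsUnit (k ν)) (hω : ω ^ N = 1)
    (hτ : ∀ ν : ℂ, τ^[N] ν = ν) {f : ℂ → ℂ}
    (hunit : ∀ ν : ℂ, kiter k τ N ν = f ν • (1 : Matrix (Fin n) (Fin n) ℂ)) (lam ν : ℂ) :
    reflTerm r τ k ω lam ν N = reflTerm r τ k ω lam ν 0 := by
  rw [reflTerm, reflTerm, hω, hτ,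
    mul_mul_inv_of_eq_smul_one (isUnit_legB (isUnit_kiter hk τ N ν)) (by rw [hunit, legB_smul_one])]
  simp [kiter, legB]

end ReflectionTerm

theorem stmt4_general (n N : ℕ) (ω : ℂ) (hω : ω ^ N = 1)
    (τ : ℂ → ℂ) (hτ : ∀ ν : ℂ, τ^[N] ν = ν)
    (r : ℂ → ℂ → Matrix (Fin n × Fin n) (Fin n × Fin n) ℂ)
    (k : ℂ → Matrix (Fin n) (Fin n) ℂ) (hk : ∀ ν : ℂ, IsUnit (k ν))
    (f : ℂ → ℂ)
    (hunit : ∀ ν : ℂ, kiter k τ N ν = f ν • (1 : Matrix (Fin n) (Fin n) ℂ))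
    (hsym : ∀ lam ν : ℂ,
      r lam ν = ω • (legA n (k lam) * legB n (k ν) * r (τ lam) (τ ν)
        * (legB n (k ν))⁻¹ * (legA n (k lam))⁻¹)) :
    NRefl n N r τ (fun j _ => ω ^ j) k := by
  intro lam ν
  show (∑ j ∈ Finset.range N, reflTerm r τ k ω lam ν j) * legA n (k lam)
    = legA n (k lam) * ∑ j ∈ Finset.range N, reflTerm r τ k ω (τ lam) ν j
  rw [Finset.sum_mul, ← Finset.sum_range_succ_eq_sum_range_of_eq
    (reflTerm_period r τ k ω hk hω hτ hunit (τ lam) ν), Finset.mul_sum]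
  exact Finset.sum_congr rfl fun j _ => reflTerm_mul_legA r τ k ω hsym (hk lam) ν j

/-- A `k` satisfying the `N`-unitarity relation `k⁽ᴺ⁾(ν) = f(ν)·1` and the symmetry
relation `r(λ,ν) = ω k_a(λ) k_b(ν) r(τ(λ),τ(ν)) k_b(ν)⁻¹ k_a(λ)⁻¹` (with `ωᴺ = 1` and
`τᴺ = id`) satisfies the `N`-reflection equation with `g⁽ʲ⁾(ν) = ωʲ`. -/
theorem stmt4 (n N : ℕ) (hn : 1 ≤ n) (hN : 1 ≤ N) (ω : ℂ) (hω : ω ^ N = 1)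
    (τ : ℂ → ℂ) (hτ : ∀ ν : ℂ, τ^[N] ν = ν)
    (r : ℂ → ℂ → Matrix (Fin n × Fin n) (Fin n × Fin n) ℂ)
    (k : ℂ → Matrix (Fin n) (Fin n) ℂ) (hk : ∀ ν : ℂ, IsUnit (k ν))
    (f : ℂ → ℂ) (hf : ∀ ν : ℂ, f ν ≠ 0)
    (hunit : ∀ ν : ℂ, kiter k τ N ν = f ν • (1 : Matrix (Fin n) (Fin n) ℂ))
    (hsym : ∀ lam ν : ℂ,
      r lam ν = ω • (legA n (k lam) * legB n (k ν) * r (τ lam) (τ ν)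
        * (legB n (k ν))⁻¹ * (legA n (k lam))⁻¹)) :
    NRefl n N r τ (fun j _ => ω ^ j) k :=
  stmt4_general n N ω hω τ hτ r k hk f hunit hsym
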